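/- arXiv:1911.02071 — 4 statements merged into one kernel-verified Lean document; each statement's English description precedes it below -/
import Mathlib

section
/- Let H be a finite cyclic subgroup of SO(3) of order n such that for every h ∈ H the square of its trace is an integer. Then n ∈ {1, 2, 3, 4, 6}. -/
/-!
A rotation `G ∈ SO(3)` with trace `t` satisfies `Gᵀ = G² - t G + t` (Cayley–Hamilton, using
`adj G = Gᵀ`), hence `tr G² = t² - 2t` and `G³ - t G² + t G - 1 = 0`. If `t²` and `(t² - 2t)²` are
integers then `4 t² · t ∈ ℤ`, so `t` is a rational number with integral square, i.e. an integer;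
`tr G² ≤ 3` forces `-1 ≤ t ≤ 3`. For `t = 0, 1, 2` the cubic divides `X³ - 1`, `X⁴ - 1`, `X⁶ - 1`,
while for `t = -1, 3` the orthogonal matrix `G²`, resp. `G`, has trace `3` and is the identity.
So the order of a generator of `H` divides `4` or `6`.
-/

open Matrix Polynomial

theorem Rat.exists_int_eq_of_sq_eq_intCast {q : ℚ} {m : ℤ} (h : q ^ 2 = m) : ∃ k : ℤ, q = k := by
  have hden : q.den ^ 2 = 1 := by rw [← Rat.den_pow, h, Rat.den_intCast]
  exact ⟨q.num, (Rat.coe_int_num_of_den_eq_one (by simpa using hden)).symm⟩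

theorem Real.exists_int_eq_of_sq_eq_intCast_of_sq_sub_two_mul_eq_intCast {x : ℝ} {m m' : ℤ}
    (hm : x ^ 2 = m) (hm' : (x ^ 2 - 2 * x) ^ 2 = m') : ∃ k : ℤ, x = k := by
  rcases eq_or_ne m 0 with rfl | hm0
  · exact ⟨0, by simpa using hm⟩
  have hx : x = ((m ^ 2 + 4 * m - m' : ℤ) / (4 * m : ℤ) : ℚ) := by
    push_cast
    rw [eq_div_iff (by positivity)]
    linear_combination (x ^ 2 + m - 4 * x + 4) * hm - hm'
  have hq : (((m ^ 2 + 4 * m - m' : ℤ) / (4 * m : ℤ) : ℚ)) ^ 2 = m := by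
    exact_mod_cast hx ▸ hm
  obtain ⟨k, hk⟩ := Rat.exists_int_eq_of_sq_eq_intCast hq
  exact ⟨k, by rw [hx, hk, Rat.cast_intCast]⟩

theorem Polynomial.pow_eq_one_of_aeval_eq_zero_of_dvd {R A : Type*} [CommRing R] [Ring A]
    [Algebra R A] {p : R[X]} {x : A} {d : ℕ} (hx : aeval x p = 0) (hp : p ∣ X ^ d - 1) :
    x ^ d = 1 := by
  simpa [sub_eq_zero] using aeval_eq_zero_of_dvd_aeval_eq_zero hp hx

namespace Matrix

section Orthogonal

variable {ι : Type*} [Fintype ι] [DecidableEq ι] {Q : Matrix ι ι ℝ}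

theorem trace_transpose_sub_one_mul_sub_one (hQ : Q ∈ orthogonalGroup ι ℝ) :
    ((Q - 1)ᵀ * (Q - 1)).trace = 2 * (Fintype.card ι - Q.trace) := by
  have h : Qᵀ * Q = 1 := (mem_orthogonalGroup_iff' ι ℝ).1 hQ
  simp only [transpose_sub, transpose_one, sub_mul, mul_sub, h, mul_one, one_mul, trace_sub,
    trace_one, trace_transpose]
  ring

theorem trace_le_card_of_mem_orthogonalGroup (hQ : Q ∈ orthogonalGroup ι ℝ) :
    Q.trace ≤ Fintype.card ι := by
  have := (posSemidef_conjTranspose_mul_self (Q - 1)).trace_nonneg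
  rw [conjTranspose_eq_transpose_of_trivial, trace_transpose_sub_one_mul_sub_one hQ] at this
  linarith

theorem eq_one_of_mem_orthogonalGroup_of_trace_eq_card (hQ : Q ∈ orthogonalGroup ι ℝ)
    (h : Q.trace = Fintype.card ι) : Q = 1 := by
  have := trace_transpose_sub_one_mul_sub_one hQ
  rw [h, sub_self, mul_zero, ← conjTranspose_eq_transpose_of_trivial,
    trace_conjTranspose_mul_self_eq_zero_iff] at this
  exact sub_eq_zero.1 this

theorem adjugate_eq_transpose_of_mem_specialOrthogonalGroup
    (hQ : Q ∈ specialOrthogonalGroup ι ℝ) : adjugate Q = Qᵀ := by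
  obtain ⟨hO, hdet⟩ := mem_specialOrthogonalGroup_iff.1 hQ
  rw [← inv_eq_left_inv ((mem_orthogonalGroup_iff' ι ℝ).1 hO), inv_def, hdet, Ring.inverse_one,
    one_smul]

end Orthogonal

theorem adjugate_fin_three_eq {α : Type*} [CommRing α] (M : Matrix (Fin 3) (Fin 3) α) :
    adjugate M = M * M - M.trace • M + (adjugate M).trace • 1 := by
  ext i j
  fin_cases i <;> fin_cases j <;>
    simp [adjugate_fin_three, trace_fin_three, mul_apply, Fin.sum_univ_three] <;>
    ring

section SpecialOrthogonalFinThree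

variable {G : Matrix (Fin 3) (Fin 3) ℝ}

theorem transpose_eq_of_mem_specialOrthogonalGroup_fin_three
    (hG : G ∈ specialOrthogonalGroup (Fin 3) ℝ) :
    Gᵀ = G ^ 2 - G.trace • G + G.trace • 1 := by
  have h := adjugate_fin_three_eq G
  rwa [adjugate_eq_transpose_of_mem_specialOrthogonalGroup hG, trace_transpose, ← sq] at h

theorem trace_sq_of_mem_specialOrthogonalGroup_fin_three
    (hG : G ∈ specialOrthogonalGroup (Fin 3) ℝ) :
    (G ^ 2).trace = G.trace ^ 2 - 2 * G.trace := by
  have h := congrArg trace (transpose_eq_of_mem_specialOrthogonalGroup_fin_three hG)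
  simp only [trace_transpose, trace_add, trace_sub, trace_smul, trace_one, Fintype.card_fin,
    smul_eq_mul] at h
  push_cast at h
  linarith

theorem aeval_eq_zero_of_mem_specialOrthogonalGroup_fin_three
    (hG : G ∈ specialOrthogonalGroup (Fin 3) ℝ) :
    aeval G (X ^ 3 - C G.trace * X ^ 2 + C G.trace * X - 1) = 0 := by
  have h : G * Gᵀ = 1 :=
    (mem_orthogonalGroup_iff (Fin 3) ℝ).1 (mem_specialOrthogonalGroup_iff.1 hG).1
  rw [transpose_eq_of_mem_specialOrthogonalGroup_fin_three hG] at h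
  simp only [map_sub, map_add, map_mul, map_pow, map_one, aeval_X, aeval_C,
    Algebra.algebraMap_eq_smul_one, smul_mul_assoc, one_mul]
  rw [← h]
  simp only [mul_sub, mul_add, mul_smul_comm, mul_one, ← sq, ← pow_succ']
  abel

theorem pow_four_eq_one_or_pow_six_eq_one_of_trace_eq_intCast
    (hG : G ∈ specialOrthogonalGroup (Fin 3) ℝ) {k : ℤ} (hk : G.trace = k) :
    G ^ 4 = 1 ∨ G ^ 6 = 1 := by
  have hO : G ∈ orthogonalGroup (Fin 3) ℝ := (mem_specialOrthogonalGroup_iff.1 hG).1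
  have hG2 : G ^ 2 ∈ orthogonalGroup (Fin 3) ℝ := pow_mem hO 2
  have hupper : G.trace ^ 2 - 2 * G.trace ≤ 3 := by
    simpa [trace_sq_of_mem_specialOrthogonalGroup_fin_three hG] using
      trace_le_card_of_mem_orthogonalGroup hG2
  have hlo : -1 ≤ k := by
    have : (-1 : ℝ) ≤ k := by nlinarith
    exact_mod_cast this
  have hhi : k ≤ 3 := by
    have : (k : ℝ) ≤ 3 := by nlinarith
    exact_mod_cast this
  have hchar := aeval_eq_zero_of_mem_specialOrthogonalGroup_fin_three hG
  rw [hk] at hchar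
  interval_cases k
  · -- `(X - 1)(X + 1)²` divides no `X ^ d - 1`, but `G²` is orthogonal with trace `3`.
    have h2 : G ^ 2 = 1 := eq_one_of_mem_orthogonalGroup_of_trace_eq_card hG2 (by
      rw [trace_sq_of_mem_specialOrthogonalGroup_fin_three hG, hk]; norm_num)
    left; rw [show 4 = 2 * 2 from rfl, pow_mul, h2, one_pow]
  · have h3 : G ^ 3 = 1 := pow_eq_one_of_aeval_eq_zero_of_dvd hchar (Dvd.intro 1 (by simp))
    right; rw [show 6 = 3 * 2 from rfl, pow_mul, h3, one_pow]
  · left; exact pow_eq_one_of_aeval_eq_zero_of_dvd hchar (Dvd.intro (X + 1) (by simp; ring))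
  · right
    exact pow_eq_one_of_aeval_eq_zero_of_dvd hchar
      (Dvd.intro (X ^ 3 + 2 * X ^ 2 + 2 * X + 1) (by simp [map_ofNat C]; ring))
  · have h1 : G = 1 := eq_one_of_mem_orthogonalGroup_of_trace_eq_card hO (by rw [hk]; norm_num)
    left; rw [h1, one_pow]

end SpecialOrthogonalFinThree

end Matrix

theorem stmt_3_general (n : ℕ) (H : Subgroup (Matrix.orthogonalGroup (Fin 3) ℝ))
    (hdet : ∀ A ∈ H, (A : Matrix (Fin 3) (Fin 3) ℝ).det = 1)
    (hcyc : IsCyclic H) (hcard : Nat.card H = n)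
    (htr : ∀ A ∈ H, ∃ m : ℤ, ((A : Matrix (Fin 3) (Fin 3) ℝ).trace) ^ 2 = m) :
    n ∈ ({1, 2, 3, 4, 6} : Set ℕ) := by
  obtain ⟨g, hg⟩ := hcyc.exists_generator
  set G : Matrix (Fin 3) (Fin 3) ℝ :=
    ((g : orthogonalGroup (Fin 3) ℝ) : Matrix (Fin 3) (Fin 3) ℝ)
  have hG : G ∈ specialOrthogonalGroup (Fin 3) ℝ :=
    mem_specialOrthogonalGroup_iff.2 ⟨(g : orthogonalGroup (Fin 3) ℝ).2, hdet _ g.2⟩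
  have hn : orderOf G = n := by
    rw [orderOf_submonoid, Subgroup.orderOf_coe, orderOf_eq_card_of_forall_mem_zpowers hg, hcard]
  obtain ⟨m, hm⟩ := htr _ g.2
  obtain ⟨m', hm'⟩ := htr _ (H.pow_mem g.2 2)
  push_cast at hm'
  rw [trace_sq_of_mem_specialOrthogonalGroup_fin_three hG] at hm'
  obtain ⟨k, hk⟩ := Real.exists_int_eq_of_sq_eq_intCast_of_sq_sub_two_mul_eq_intCast hm hm'
  have hdvd : n ∣ 4 ∨ n ∣ 6 := hn ▸
    (pow_four_eq_one_or_pow_six_eq_one_of_trace_eq_intCast hG hk).imp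
      orderOf_dvd_of_pow_eq_one orderOf_dvd_of_pow_eq_one
  have h : n ∈ Nat.divisors 4 ∪ Nat.divisors 6 := by simpa using hdvd
  rw [show Nat.divisors 4 ∪ Nat.divisors 6 = {1, 2, 3, 4, 6} by decide] at h
  simpa using h

theorem stmt_3 (n : ℕ) (H : Subgroup (Matrix.orthogonalGroup (Fin 3) ℝ))
    (hdet : ∀ A ∈ H, (A : Matrix (Fin 3) (Fin 3) ℝ).det = 1)
    (hfin : Finite H) (hcyc : IsCyclic H) (hcard : Nat.card H = n)
    (htr : ∀ A ∈ H, ∃ m : ℤ, ((A : Matrix (Fin 3) (Fin 3) ℝ).trace) ^ 2 = m) :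
    n ∈ ({1, 2, 3, 4, 6} : Set ℕ) :=
  stmt_3_general n H hdet hcyc hcard htr
end

section
/- Up to conjugacy, the wreath product C₂ ≀ S₃ contains exactly one subgroup isomorphic to the cyclic group C₆, namely the subgroup generated by the product abc of the three sign generators together with a 3-cycle s. -/
/-!
Write an element as `(v, σ)` with `v ∈ (C₂)³` and `σ ∈ S₃`. Its cube is `(v + σv + σ²v, 1)` when
`σ` is a 3-cycle, and its square or fourth power is trivial otherwise, so `(v, σ)` has order 6
exactly when `σ` is a 3-cycle and `v` has an odd number of nontrivial coordinates. Conjugating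
by `(u, 1)` changes `v` by `u + σu`, which runs through all vectors of even weight, and the two
3-cycles are conjugate in `S₃`; hence every element of order 6 is conjugate to `abc·s` (checked
by `decide` on the 48 elements), and so is the generator of any cyclic subgroup of order 6.
-/

/-- The permutation action of `S₃` on `(C₂)³` by permuting the coordinates. -/
def permAction : Equiv.Perm (Fin 3) →* MulAut (Fin 3 → Multiplicative (ZMod 2)) where
  toFun σ := MulEquiv.arrowCongr σ (MulEquiv.refl (Multiplicative (ZMod 2)))
  map_one' := by ext x n; rfl
  map_mul' σ τ := by ext x n; rfl

/-- The wreath product `C₂ ≀ S₃ = (C₂)³ ⋊ S₃`. -/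
abbrev WreathC2S3 : Type :=
  SemidirectProduct (Fin 3 → Multiplicative (ZMod 2)) (Equiv.Perm (Fin 3)) permAction

/-- The element `abc·s`: the product of all three sign generators with a 3-cycle. -/
noncomputable def abcs : WreathC2S3 :=
  SemidirectProduct.inl (fun _ => Multiplicative.ofAdd (1 : ZMod 2)) *
    SemidirectProduct.inr (finRotate 3)

theorem orderOf_eq_six_iff {G : Type*} [Monoid G] {g : G} :
    orderOf g = 6 ↔ g ^ 6 = 1 ∧ g ^ 2 ≠ 1 ∧ g ^ 3 ≠ 1 := by
  constructor
  · intro hg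
    exact ⟨hg ▸ pow_orderOf_eq_one g, pow_ne_one_of_lt_orderOf (by norm_num) (by omega),
      pow_ne_one_of_lt_orderOf (by norm_num) (by omega)⟩
  · rintro ⟨h6, h2, h3⟩
    refine orderOf_eq_of_pow_and_pow_div_prime (by norm_num) h6 fun p hp hp6 => ?_
    have : p ≤ 6 := Nat.le_of_dvd (by norm_num) hp6
    have hp23 : p = 2 ∨ p = 3 := by interval_cases p <;> revert hp hp6 <;> decide
    rcases hp23 with rfl | rfl
    exacts [h3, h2]

theorem Subgroup.exists_orderOf_eq_card_of_isCyclic {G : Type*} [Group G] (H : Subgroup G)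
    [IsCyclic H] : ∃ g : G, orderOf g = Nat.card H ∧ Subgroup.zpowers g = H := by
  obtain ⟨g, rfl⟩ := (H.isCyclic_iff_exists_zpowers_eq_top).mp ‹_›
  exact ⟨g, (Nat.card_zpowers g).symm, rfl⟩

theorem Subgroup.map_conj_zpowers {G : Type*} [Group G] (x g : G) :
    (Subgroup.zpowers g).map (MulAut.conj x).toMonoidHom = Subgroup.zpowers (x * g * x⁻¹) :=
  MonoidHom.map_zpowers _ g

namespace WreathC2S3

instance : Fintype WreathC2S3 := Fintype.ofEquiv _ SemidirectProduct.equivProd.symm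

instance : DecidableEq WreathC2S3 := SemidirectProduct.equivProd.decidableEq

theorem orderOf_abcs : orderOf abcs = 6 :=
  orderOf_eq_six_iff.mpr (by decide)

set_option maxRecDepth 10000 in
theorem isConj_abcs_of_orderOf_eq_six {g : WreathC2S3} (hg : orderOf g = 6) : IsConj abcs g := by
  have key : ∀ g : WreathC2S3, g ^ 6 = 1 → g ^ 2 ≠ 1 → g ^ 3 ≠ 1 →
      ∃ x, x * abcs * x⁻¹ = g := by decide
  obtain ⟨h6, h2, h3⟩ := orderOf_eq_six_iff.mp hg
  exact isConj_iff.mpr (key g h6 h2 h3)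

end WreathC2S3

theorem stmt_7 :
    orderOf abcs = 6 ∧
      ∀ H : Subgroup WreathC2S3, IsCyclic H → Nat.card H = 6 →
        ∃ x : WreathC2S3,
          H = Subgroup.map (MulAut.conj x).toMonoidHom (Subgroup.zpowers abcs) := by
  refine ⟨WreathC2S3.orderOf_abcs, fun H _ hcard => ?_⟩
  obtain ⟨g, hg, rfl⟩ := H.exists_orderOf_eq_card_of_isCyclic
  obtain ⟨x, rfl⟩ := isConj_iff.mp (WreathC2S3.isConj_abcs_of_orderOf_eq_six (hg.trans hcard))
  exact ⟨x, (Subgroup.map_conj_zpowers x abcs).symm⟩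
end

section
/- Let G be the image of SU(3) in GL₆(ℂ) under A ↦ diag(A, conj(A)). Then the commutant of G in M₆(ℂ) equals the commutant of the image of U(3) under the same embedding (both consist of block scalar matrices diag(u·I₃, v·I₃)); consequently SU(3) does not equal the subgroup of USp(6) fixing its own commutant. -/
open Matrix

/-- The image of `U(3)` in `GL₆(ℂ)` under `A ↦ diag(A, conj A)`. -/
def U3block : Set (Matrix (Fin 3 ⊕ Fin 3) (Fin 3 ⊕ Fin 3) ℂ) :=
  {M | ∃ A ∈ Matrix.unitaryGroup (Fin 3) ℂ,
    M = Matrix.fromBlocks A 0 0 (A.map (starRingEnd ℂ))}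

/-- The image of `SU(3)` in `GL₆(ℂ)` under `A ↦ diag(A, conj A)`. -/
def SU3block : Set (Matrix (Fin 3 ⊕ Fin 3) (Fin 3 ⊕ Fin 3) ℂ) :=
  {M | ∃ A ∈ Matrix.specialUnitaryGroup (Fin 3) ℂ,
    M = Matrix.fromBlocks A 0 0 (A.map (starRingEnd ℂ))}

/-- The matrix of the standard symplectic form. -/
def Jmat : Matrix (Fin 3 ⊕ Fin 3) (Fin 3 ⊕ Fin 3) ℂ :=
  Matrix.fromBlocks 0 1 (-1) 0

/-- The compact symplectic group `USp(6)` as a set of matrices. -/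
def USp6 : Set (Matrix (Fin 3 ⊕ Fin 3) (Fin 3 ⊕ Fin 3) ℂ) :=
  {M | M ∈ Matrix.unitaryGroup (Fin 3 ⊕ Fin 3) ℂ ∧ M.transpose * Jmat * M = Jmat}

/-! A primitive cube root of unity `ω` gives the scalar `ω • 1 ∈ SU(3)`, whose image is
`diag(ω I₃, ω̄ I₃)`. As `ω ≠ ω̄`, every matrix commuting with it has vanishing off-diagonal blocks
and therefore commutes with all `diag(u I₃, v I₃)`. Since `U(3) = U(1) · SU(3)` and the image of
`c • B` is `diag(c I₃, c̄ I₃)` times the image of `B`, the commutants of SU(3) and U(3) coincide.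
The image of `U(3)` lies in `USp(6)`, so the group fixing the commutant of SU(3) contains the image
of `I • 1`, which is not in the image of SU(3) because `det (I • 1) = -I`. -/

open ComplexConjugate

section BlockScalar

variable {m n K : Type*} [Fintype m] [Fintype n] [DecidableEq m] [DecidableEq n] [Field K]

theorem commute_fromBlocks_smul_one_iff (u v : K) (X : Matrix (m ⊕ n) (m ⊕ n) K) :
    Commute (fromBlocks (u • 1) 0 0 (v • 1)) X ↔
      (u - v) • X.toBlocks₁₂ = 0 ∧ (u - v) • X.toBlocks₂₁ = 0 := by
  conv_lhs => rw [← fromBlocks_toBlocks X]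
  simp only [Commute, SemiconjBy, fromBlocks_multiply, fromBlocks_inj, Matrix.smul_mul,
    Matrix.mul_smul, Matrix.one_mul, Matrix.mul_one, Matrix.zero_mul, Matrix.mul_zero, add_zero,
    zero_add, true_and, and_true, sub_smul, sub_eq_zero]
  rw [eq_comm (a := v • _)]

theorem commute_fromBlocks_smul_one_of_commute {u v : K} (huv : u ≠ v)
    {X : Matrix (m ⊕ n) (m ⊕ n) K} (hX : Commute (fromBlocks (u • 1) 0 0 (v • 1)) X) (u' v' : K) :
    Commute (fromBlocks (u' • 1) 0 0 (v' • 1)) X := by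
  simp only [commute_fromBlocks_smul_one_iff, smul_eq_zero, sub_ne_zero.2 huv, false_or] at hX ⊢
  simp [hX]

end BlockScalar

section ConjBlockDiag

theorem transpose_map_conj {n : Type*} (A : Matrix n n ℂ) : (A.map conj)ᵀ = star A := rfl

variable {n : Type*} [Fintype n] [DecidableEq n]

def conjBlockDiag (A : Matrix n n ℂ) : Matrix (n ⊕ n) (n ⊕ n) ℂ :=
  fromBlocks A 0 0 (A.map conj)

theorem conjBlockDiag_smul (c : ℂ) (A : Matrix n n ℂ) :
    conjBlockDiag (c • A) = fromBlocks (c • 1) 0 0 (conj c • 1) * conjBlockDiag A := by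
  ext (i | i) (j | j) <;> simp [conjBlockDiag, fromBlocks_multiply]

theorem conjBlockDiag_smul_one (c : ℂ) :
    conjBlockDiag (c • 1 : Matrix n n ℂ) = fromBlocks (c • 1) 0 0 (conj c • 1) := by
  rw [conjBlockDiag_smul, conjBlockDiag, Matrix.map_one _ (map_zero _) (map_one _),
    fromBlocks_one, Matrix.mul_one]

theorem transpose_mul_map_conj {A : Matrix n n ℂ} (hA : A ∈ unitaryGroup n ℂ) :
    Aᵀ * A.map conj = 1 := by
  rw [← transpose_transpose (A.map conj), ← transpose_mul, transpose_map_conj,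
    mem_unitaryGroup_iff'.1 hA, transpose_one]

theorem map_conj_mem_unitaryGroup {A : Matrix n n ℂ} (hA : A ∈ unitaryGroup n ℂ) :
    A.map conj ∈ unitaryGroup n ℂ :=
  map_star_mem_unitaryGroup_iff.2 hA

theorem conjBlockDiag_mem_unitaryGroup {A : Matrix n n ℂ} (hA : A ∈ unitaryGroup n ℂ) :
    conjBlockDiag A ∈ unitaryGroup (n ⊕ n) ℂ := by
  rw [mem_unitaryGroup_iff', star_eq_conjTranspose, conjBlockDiag, fromBlocks_conjTranspose,
    fromBlocks_multiply]
  simp [← star_eq_conjTranspose, mem_unitaryGroup_iff'.1 hA,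
    mem_unitaryGroup_iff'.1 (map_conj_mem_unitaryGroup hA)]

theorem conjBlockDiag_transpose_mul_mul {A : Matrix n n ℂ} (hA : A ∈ unitaryGroup n ℂ) :
    (conjBlockDiag A)ᵀ * fromBlocks 0 1 (-1) 0 * conjBlockDiag A = fromBlocks 0 1 (-1) 0 := by
  simp [conjBlockDiag, fromBlocks_transpose, fromBlocks_multiply, transpose_map_conj,
    transpose_mul_map_conj hA, mem_unitaryGroup_iff'.1 hA]

end ConjBlockDiag

theorem mem_unitary_of_norm_eq_one {c : ℂ} (hc : ‖c‖ = 1) : c ∈ unitary ℂ := by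
  rw [Unitary.mem_iff_star_mul_self, Complex.star_def, Complex.conj_mul', hc]
  norm_num

section ScalarDecomposition

variable {n : Type*} [Fintype n] [DecidableEq n]

theorem smul_one_mem_specialUnitaryGroup {c : ℂ} (hc : c ∈ unitary ℂ)
    (hcn : c ^ Fintype.card n = 1) : (c • 1 : Matrix n n ℂ) ∈ specialUnitaryGroup n ℂ :=
  mem_specialUnitaryGroup_iff.2
    ⟨Unitary.smul_mem_of_mem hc (one_mem _), by rw [det_smul, det_one, mul_one, hcn]⟩

theorem exists_smul_of_mem_unitaryGroup [Nonempty n] {A : Matrix n n ℂ}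
    (hA : A ∈ unitaryGroup n ℂ) :
    ∃ c ∈ unitary ℂ, ∃ B ∈ specialUnitaryGroup n ℂ, A = c • B := by
  obtain ⟨c, hcn⟩ : ∃ c : ℂ, c ^ Fintype.card n = A.det :=
    ⟨_, Complex.cpow_nat_inv_pow _ Fintype.card_ne_zero⟩
  have hnorm : ‖c‖ = 1 := by
    have h : ‖A.det‖ = 1 := CStarRing.norm_of_mem_unitary (det_of_mem_unitary hA)
    rw [← hcn, norm_pow] at h
    exact (pow_eq_one_iff_of_nonneg (norm_nonneg _) Fintype.card_ne_zero).1 h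
  have hc0 : c ≠ 0 := by rintro rfl; simp at hnorm
  refine ⟨c, mem_unitary_of_norm_eq_one hnorm, c⁻¹ • A, mem_specialUnitaryGroup_iff.2 ⟨?_, ?_⟩,
    by rw [smul_smul, mul_inv_cancel₀ hc0, one_smul]⟩
  · exact Unitary.smul_mem_of_mem
      (mem_unitary_of_norm_eq_one (by rw [norm_inv, hnorm, inv_one])) hA
  · rw [det_smul, ← hcn, inv_pow, inv_mul_cancel₀ (pow_ne_zero _ hc0)]

end ScalarDecomposition

theorem exists_pow_three_eq_one_conj_ne : ∃ ω : ℂ, ω ∈ unitary ℂ ∧ ω ^ 3 = 1 ∧ conj ω ≠ ω := by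
  have hω := Complex.isPrimitiveRoot_exp 3 three_ne_zero
  set ω := Complex.exp (2 * Real.pi * Complex.I / (3 : ℕ))
  have hunit := mem_unitary_of_norm_eq_one (hω.norm'_eq_one three_ne_zero)
  refine ⟨ω, hunit, hω.pow_eq_one, fun h => ?_⟩
  have h2 : ω ^ 2 = 1 := by
    rw [sq, ← Unitary.star_mul_self_of_mem hunit, Complex.star_def, h]
  exact absurd ((hω.pow_eq_one_iff_dvd 2).1 h2) (by norm_num)

theorem SU3block_subset_U3block : SU3block ⊆ U3block := by
  rintro _ ⟨A, hA, rfl⟩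
  exact ⟨A, specialUnitaryGroup_le_unitaryGroup hA, rfl⟩

theorem U3block_subset_USp6 : U3block ⊆ USp6 := by
  rintro _ ⟨A, hA, rfl⟩
  exact ⟨conjBlockDiag_mem_unitaryGroup hA, conjBlockDiag_transpose_mul_mul hA⟩

theorem commute_fromBlocks_smul_one_of_mem_centralizer_SU3block
    {X : Matrix (Fin 3 ⊕ Fin 3) (Fin 3 ⊕ Fin 3) ℂ} (hX : X ∈ Subalgebra.centralizer ℂ SU3block)
    (u v : ℂ) : Commute (fromBlocks (u • 1) 0 0 (v • 1)) X := by
  obtain ⟨ω, hω, hω3, hωconj⟩ := exists_pow_three_eq_one_conj_ne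
  have hSU : (ω • 1 : Matrix (Fin 3) (Fin 3) ℂ) ∈ specialUnitaryGroup (Fin 3) ℂ :=
    smul_one_mem_specialUnitaryGroup hω (by rwa [Fintype.card_fin])
  refine commute_fromBlocks_smul_one_of_commute hωconj.symm ?_ u v
  rw [← conjBlockDiag_smul_one]
  exact (Subalgebra.mem_centralizer_iff ℂ).1 hX _ ⟨_, hSU, rfl⟩

theorem centralizer_SU3block_eq_centralizer_U3block :
    Subalgebra.centralizer ℂ SU3block = Subalgebra.centralizer ℂ U3block := by
  refine le_antisymm (fun X hX => ?_) (Subalgebra.centralizer_le ℂ _ _ SU3block_subset_U3block)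
  rw [Subalgebra.mem_centralizer_iff]
  rintro _ ⟨A, hA, rfl⟩
  obtain ⟨c, -, B, hB, rfl⟩ := exists_smul_of_mem_unitaryGroup hA
  rw [← conjBlockDiag, conjBlockDiag_smul]
  exact (commute_fromBlocks_smul_one_of_mem_centralizer_SU3block hX _ _).mul_left
    ((Subalgebra.mem_centralizer_iff ℂ).1 hX _ ⟨B, hB, rfl⟩)

theorem U3block_not_subset_SU3block : ¬U3block ⊆ SU3block := by
  have hI : Complex.I • (1 : Matrix (Fin 3) (Fin 3) ℂ) ∈ unitaryGroup (Fin 3) ℂ :=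
    Unitary.smul_mem_of_mem (mem_unitary_of_norm_eq_one Complex.norm_I) (one_mem _)
  intro h
  obtain ⟨B, hB, hBI⟩ := h ⟨_, hI, rfl⟩
  have hBeq : B = Complex.I • 1 := by simpa using congrArg toBlocks₁₁ hBI.symm
  have hdet := (mem_specialUnitaryGroup_iff.1 hB).2
  rw [hBeq, det_smul] at hdet
  norm_num [Complex.ext_iff, pow_succ] at hdet

theorem stmt_9 :
    Subalgebra.centralizer ℂ SU3block = Subalgebra.centralizer ℂ U3block ∧
      SU3block ≠
        {M | M ∈ USp6 ∧ ∀ X ∈ Subalgebra.centralizer ℂ SU3block, X * M = M * X} := by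
  refine ⟨centralizer_SU3block_eq_centralizer_U3block, fun h => U3block_not_subset_SU3block ?_⟩
  intro M hM
  rw [h, centralizer_SU3block_eq_centralizer_U3block]
  exact ⟨U3block_subset_USp6 hM, fun X hX => ((Subalgebra.mem_centralizer_iff ℂ).1 hX M hM).symm⟩
end

section
/- Let N be the normalizer in USp(6) of the subgroup G⁰ = {diag(A, conj(A)) : A ∈ U(3)}, where USp(6) is defined with respect to the symplectic form J = (0 I₃; −I₃ 0). Then N = G⁰ ∪ J·G⁰, and hence N/G⁰ is cyclic of order 2. -/
/-!
The element `D = diag(i·1, -i·1)` of `G⁰` is central in `G⁰`, so conjugating it by an element `M`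
of the normalizer gives a central element `diag(B, B̄)` of `G⁰` with square `-1`. Since the unitary
matrices span all matrices, `B` commutes with everything and is a scalar, hence `M D M⁻¹ = ±D`.
A matrix commuting with `D` is block diagonal, and a block diagonal matrix that is unitary and
symplectic is `diag(A, Ā)` with `A` unitary. If instead `M` anticommutes with `D`, then so does `J`,
and `J⁻¹ M` commutes with `D`.
-/

open Matrix

/-- The normalizer of `G⁰` inside `USp(6)`. -/
noncomputable def Normalizer : Set (Matrix (Fin 3 ⊕ Fin 3) (Fin 3 ⊕ Fin 3) ℂ) :=
  {M | M ∈ USp6 ∧ (fun X => M * X * M⁻¹) '' U3block = U3block}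

open Complex

section DiagConj

variable {n : Type*} [Fintype n] [DecidableEq n]

def diagConj : Matrix n n ℂ →+* Matrix (n ⊕ n) (n ⊕ n) ℂ where
  toFun A := fromBlocks A 0 0 (A.map (starRingEnd ℂ))
  map_one' := by simp [← fromBlocks_one]
  map_mul' A B := by simp [fromBlocks_multiply, Matrix.map_mul]
  map_zero' := by simp
  map_add' A B := by simp [fromBlocks_add, Matrix.map_add]

theorem diagConj_apply (A : Matrix n n ℂ) :
    diagConj A = fromBlocks A 0 0 (A.map (starRingEnd ℂ)) := rfl

theorem diagConj_injective : Function.Injective (diagConj : Matrix n n ℂ → _) :=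
  fun A B h => by simpa [diagConj_apply] using congrArg toBlocks₁₁ h

theorem star_diagConj (A : Matrix n n ℂ) : star (diagConj A) = diagConj (star A) := by
  simp only [diagConj_apply, star_eq_conjTranspose, fromBlocks_conjTranspose, conjTranspose_zero]
  rfl

theorem diagConj_mem_unitaryGroup_iff {A : Matrix n n ℂ} :
    diagConj A ∈ unitaryGroup (n ⊕ n) ℂ ↔ A ∈ unitaryGroup n ℂ := by
  rw [mem_unitaryGroup_iff, mem_unitaryGroup_iff, star_diagConj, ← map_mul, ← map_one diagConj,
    diagConj_injective.eq_iff]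

theorem inv_diagConj {A : Matrix n n ℂ} (hA : A ∈ unitaryGroup n ℂ) :
    (diagConj A)⁻¹ = diagConj (star A) :=
  inv_eq_left_inv (by rw [← map_mul, Unitary.star_mul_self_of_mem hA, map_one])

theorem diagConj_mem_symplecticGroup {A : Matrix n n ℂ} (hA : A ∈ unitaryGroup n ℂ) :
    diagConj A ∈ symplecticGroup n ℂ := by
  have h₁ : star A * A = 1 := mem_unitaryGroup_iff'.1 hA
  have h₂ : Aᵀ * A.map (starRingEnd ℂ) = 1 := by
    rw [show A.map (starRingEnd ℂ) = (star A)ᵀ from rfl, ← transpose_mul, h₁, transpose_one]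
  have h₃ : (A.map (starRingEnd ℂ))ᵀ * A = 1 := h₁
  rw [SymplecticGroup.mem_iff']
  simp [diagConj_apply, J, fromBlocks_transpose, fromBlocks_multiply, h₂, h₃]

theorem J_mul_diagConj (A : Matrix n n ℂ) :
    J n ℂ * diagConj A = diagConj (A.map (starRingEnd ℂ)) * J n ℂ := by
  simp [J, diagConj_apply, fromBlocks_multiply, Matrix.map_map, Function.comp_def]

theorem semiconjBy_J_diagConj_scalar (z : ℂ) :
    SemiconjBy (J n ℂ) (diagConj (scalar n z)) (diagConj (scalar n (starRingEnd ℂ z))) := by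
  rw [SemiconjBy, J_mul_diagConj, scalar_apply, diagonal_map (map_zero _), ← scalar_apply]

theorem toBlocks_offDiag_eq_zero_of_commute {M : Matrix (n ⊕ n) (n ⊕ n) ℂ}
    (h : Commute M (diagConj (scalar n I))) : M.toBlocks₁₂ = 0 ∧ M.toBlocks₂₁ = 0 := by
  have hD : diagConj (scalar n I) = diagonal (Sum.elim (fun _ => I) fun _ => -I) := by
    simp [diagConj_apply, ← fromBlocks_diagonal]
  have key : ∀ i j, (M * diagConj (scalar n I)) i j = (diagConj (scalar n I) * M) i j := by
    intro i j; rw [h.eq]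
  simp only [hD, mul_diagonal, diagonal_mul] at key
  constructor <;> ext a b
  · have h₁₂ := key (Sum.inl a) (Sum.inr b)
    simp only [Sum.elim_inl, Sum.elim_inr] at h₁₂
    have : M (Sum.inl a) (Sum.inr b) * (2 * I) = 0 := by linear_combination -h₁₂
    simpa [toBlocks₁₂, I_ne_zero] using this
  · have h₂₁ := key (Sum.inr a) (Sum.inl b)
    simp only [Sum.elim_inl, Sum.elim_inr] at h₂₁
    have : M (Sum.inr a) (Sum.inl b) * (2 * I) = 0 := by linear_combination h₂₁
    simpa [toBlocks₂₁, I_ne_zero] using this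

theorem exists_diagConj_eq_of_commute {M : Matrix (n ⊕ n) (n ⊕ n) ℂ}
    (hU : M ∈ unitaryGroup (n ⊕ n) ℂ) (hS : M ∈ symplecticGroup n ℂ)
    (h : Commute M (diagConj (scalar n I))) : ∃ A ∈ unitaryGroup n ℂ, diagConj A = M := by
  obtain ⟨h₁₂, h₂₁⟩ := toBlocks_offDiag_eq_zero_of_commute h
  set P := M.toBlocks₁₁
  set S := M.toBlocks₂₂
  have hM : M = fromBlocks P 0 0 S := by
    conv_lhs => rw [← fromBlocks_toBlocks M, h₁₂, h₂₁]
  have hP : P * star P = 1 := by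
    have := congrArg toBlocks₁₁ (mem_unitaryGroup_iff.1 hU)
    simpa [hM, star_eq_conjTranspose, fromBlocks_conjTranspose, fromBlocks_multiply,
      ← fromBlocks_one] using this
  have hPS : Pᵀ * S = 1 := by
    have := congrArg toBlocks₁₂ (SymplecticGroup.mem_iff'.1 hS)
    simpa [hM, J, fromBlocks_transpose, fromBlocks_multiply] using this
  have hS : S = P.map (starRingEnd ℂ) := by
    have hPt : P.map (starRingEnd ℂ) * Pᵀ = 1 := by
      rw [show P.map (starRingEnd ℂ) = (star P)ᵀ from rfl, ← transpose_mul, hP, transpose_one]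
    calc S = P.map (starRingEnd ℂ) * Pᵀ * S := by rw [hPt, Matrix.one_mul]
      _ = P.map (starRingEnd ℂ) := by rw [Matrix.mul_assoc, hPS, Matrix.mul_one]
  exact ⟨P, mem_unitaryGroup_iff.2 hP, by rw [hM, hS, diagConj_apply]⟩

end DiagConj

open scoped Matrix.Norms.L2Operator in
theorem mem_range_scalar_of_commute_unitaryGroup {n : Type*} [Fintype n] [DecidableEq n]
    {B : Matrix n n ℂ} (h : ∀ U ∈ unitaryGroup n ℂ, Commute B U) : B ∈ Set.range (scalar n) := by
  rw [← center_eq_range, Semigroup.mem_center_iff]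
  intro X
  have hX : X ∈ Submodule.span ℂ (unitary (Matrix n n ℂ) : Set (Matrix n n ℂ)) := by
    rw [CStarAlgebra.span_unitary]; trivial
  induction hX using Submodule.span_induction with
  | mem U hU => exact (h U hU).eq.symm
  | zero => simp
  | add X Y _ _ hX hY => rw [Matrix.add_mul, Matrix.mul_add, hX, hY]
  | smul c X _ hX => rw [Matrix.smul_mul, Matrix.mul_smul, hX]

section Conjugation

variable {m R : Type*} [Fintype m] [DecidableEq m] [CommRing R] {M : Matrix m m R}

theorem conj_mul_conj (hM : IsUnit M.det) (X Y : Matrix m m R) :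
    M * X * M⁻¹ * (M * Y * M⁻¹) = M * (X * Y) * M⁻¹ := by
  simp only [Matrix.mul_assoc, nonsing_inv_mul_cancel_left _ _ hM]

theorem commute_conj (hM : IsUnit M.det) {X Y : Matrix m m R} (h : Commute X Y) :
    Commute (M * X * M⁻¹) (M * Y * M⁻¹) := by
  rw [Commute, SemiconjBy, conj_mul_conj hM, conj_mul_conj hM, h.eq]

theorem semiconjBy_of_conj_eq (hM : IsUnit M.det) {X Y : Matrix m m R} (h : M * X * M⁻¹ = Y) :
    SemiconjBy M X Y := by
  rw [SemiconjBy, ← h, Matrix.mul_assoc _ M⁻¹, nonsing_inv_mul _ hM, Matrix.mul_one]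

theorem image_conj_eq_of_mapsTo {S : Set (Matrix m m R)} (hM : IsUnit M.det)
    (h₁ : Set.MapsTo (fun X => M * X * M⁻¹) S S) (h₂ : Set.MapsTo (fun X => M⁻¹ * X * M) S S) :
    (fun X => M * X * M⁻¹) '' S = S := by
  refine h₁.image_subset.antisymm fun Y hY => ⟨_, h₂ hY, ?_⟩
  simp only [Matrix.mul_assoc, mul_nonsing_inv_cancel_left _ _ hM, mul_nonsing_inv _ hM,
    Matrix.mul_one]

theorem image_conj_mul (M N : Matrix m m R) (S : Set (Matrix m m R)) :
    (fun X => M * N * X * (M * N)⁻¹) '' S =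
      (fun X => M * X * M⁻¹) '' ((fun X => N * X * N⁻¹) '' S) := by
  simp only [Set.image_image, Matrix.mul_inv_rev, Matrix.mul_assoc]

end Conjugation

section USp6

variable {M N : Matrix (Fin 3 ⊕ Fin 3) (Fin 3 ⊕ Fin 3) ℂ}

theorem U3block_eq_image : U3block = diagConj '' unitaryGroup (Fin 3) ℂ := by
  ext M
  simp only [U3block, Set.mem_ofPred_eq, Set.mem_image, SetLike.mem_coe, diagConj_apply, eq_comm]

theorem diagConj_mem_U3block_iff {A : Matrix (Fin 3) (Fin 3) ℂ} :
    diagConj A ∈ U3block ↔ A ∈ unitaryGroup (Fin 3) ℂ := by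
  rw [U3block_eq_image, diagConj_injective.mem_set_image, SetLike.mem_coe]

theorem Jmat_eq_neg_J : Jmat = -J (Fin 3) ℂ := by
  simp [Jmat, J, fromBlocks_neg]

theorem Jmat_inv : Jmat⁻¹ = J (Fin 3) ℂ :=
  inv_eq_left_inv (by rw [Jmat_eq_neg_J, Matrix.mul_neg, J_squared, neg_neg])

theorem Jmat_mul_Jmat : Jmat * Jmat = -1 := by
  rw [Jmat_eq_neg_J, neg_mul_neg, J_squared]

theorem mem_USp6_iff :
    M ∈ USp6 ↔ M ∈ unitaryGroup (Fin 3 ⊕ Fin 3) ℂ ∧ M ∈ symplecticGroup (Fin 3) ℂ := by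
  rw [USp6, Set.mem_ofPred_eq, SymplecticGroup.mem_iff', Jmat_eq_neg_J, Matrix.mul_neg,
    Matrix.neg_mul, neg_inj]

theorem J_mem_USp6 : J (Fin 3) ℂ ∈ USp6 := by
  refine mem_USp6_iff.2 ⟨?_, SymplecticGroup.J_mem _ _⟩
  have hJ : (J (Fin 3) ℂ)ᴴ = -J (Fin 3) ℂ := by simp [J, fromBlocks_conjTranspose, fromBlocks_neg]
  rw [mem_unitaryGroup_iff, star_eq_conjTranspose, hJ, Matrix.mul_neg, J_squared, neg_neg]

theorem neg_mem_USp6 (hM : M ∈ USp6) : -M ∈ USp6 := by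
  rw [mem_USp6_iff, mem_unitaryGroup_iff, star_neg, neg_mul_neg, ← mem_unitaryGroup_iff] at *
  exact ⟨hM.1, SymplecticGroup.neg_mem hM.2⟩

theorem Jmat_mem_USp6 : Jmat ∈ USp6 :=
  Jmat_eq_neg_J ▸ neg_mem_USp6 J_mem_USp6

theorem diagConj_mem_USp6 {A : Matrix (Fin 3) (Fin 3) ℂ} (hA : A ∈ unitaryGroup (Fin 3) ℂ) :
    diagConj A ∈ USp6 :=
  mem_USp6_iff.2 ⟨diagConj_mem_unitaryGroup_iff.2 hA, diagConj_mem_symplecticGroup hA⟩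

theorem isUnit_det_of_mem_USp6 (hM : M ∈ USp6) : IsUnit M.det :=
  UnitaryGroup.det_isUnit ⟨M, hM.1⟩

theorem mul_mem_USp6 (hM : M ∈ USp6) (hN : N ∈ USp6) : M * N ∈ USp6 := by
  rw [mem_USp6_iff] at *
  exact ⟨mul_mem hM.1 hN.1, mul_mem hM.2 hN.2⟩

theorem mul_mem_Normalizer (hM : M ∈ Normalizer) (hN : N ∈ Normalizer) : M * N ∈ Normalizer :=
  ⟨mul_mem_USp6 hM.1 hN.1, by rw [image_conj_mul, hN.2, hM.2]⟩

theorem U3block_subset_Normalizer : U3block ⊆ Normalizer := by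
  rw [U3block_eq_image]
  rintro _ ⟨A, hA, rfl⟩
  have conj_mapsTo : ∀ B ∈ unitaryGroup (Fin 3) ℂ,
      Set.MapsTo (fun X => diagConj B * X * diagConj (star B)) U3block U3block := by
    intro B hB
    rw [U3block_eq_image]
    rintro _ ⟨C, hC, rfl⟩
    exact ⟨B * C * star B, mul_mem (mul_mem hB hC) (Unitary.star_mem hB), by simp only [map_mul]⟩
  refine ⟨diagConj_mem_USp6 hA, image_conj_eq_of_mapsTo
    (isUnit_det_of_mem_USp6 (diagConj_mem_USp6 hA)) ?_ ?_⟩ <;> rw [inv_diagConj hA]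
  · exact conj_mapsTo A hA
  · simpa only [star_star] using conj_mapsTo (star A) (Unitary.star_mem hA)

theorem Jmat_mul_diagConj_mul_Jmat_inv (C : Matrix (Fin 3) (Fin 3) ℂ) :
    Jmat * diagConj C * Jmat⁻¹ = diagConj (C.map (starRingEnd ℂ)) := by
  rw [Jmat_inv, Jmat_eq_neg_J, Matrix.neg_mul, J_mul_diagConj, Matrix.neg_mul, Matrix.mul_assoc,
    J_squared, Matrix.mul_neg, Matrix.mul_one, neg_neg]

theorem Jmat_mem_Normalizer : Jmat ∈ Normalizer := by
  have conj_mapsTo : Set.MapsTo (fun X => Jmat * X * Jmat⁻¹) U3block U3block := by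
    rw [U3block_eq_image]
    rintro _ ⟨C, hC, rfl⟩
    exact ⟨_, map_star_mem_unitaryGroup_iff.2 hC, (Jmat_mul_diagConj_mul_Jmat_inv C).symm⟩
  refine ⟨Jmat_mem_USp6, image_conj_eq_of_mapsTo (isUnit_det_of_mem_USp6 Jmat_mem_USp6)
    conj_mapsTo fun X hX => ?_⟩
  have : Jmat⁻¹ * X * Jmat = Jmat * X * Jmat⁻¹ := by
    rw [Jmat_inv, Jmat_eq_neg_J, Matrix.neg_mul, Matrix.mul_neg, Matrix.neg_mul]
  simpa only [this] using conj_mapsTo hX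

theorem Jmat_not_mem_U3block : Jmat ∉ U3block := by
  rintro ⟨A, -, h⟩
  simpa [Jmat] using congrFun₂ h (Sum.inl 0) (Sum.inr 0)

theorem Jmat_mul_Jmat_mem_U3block : Jmat * Jmat ∈ U3block := by
  rw [Jmat_mul_Jmat, ← map_one (diagConj (n := Fin 3)), ← map_neg, diagConj_mem_U3block_iff]
  simp [mem_unitaryGroup_iff]

theorem commute_or_semiconjBy_neg_of_mem_Normalizer (hM : M ∈ Normalizer) :
    Commute M (diagConj (scalar (Fin 3) I)) ∨
      SemiconjBy M (diagConj (scalar (Fin 3) I)) (-diagConj (scalar (Fin 3) I)) := by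
  set D := diagConj (scalar (Fin 3) I) with hD
  obtain ⟨hUSp, himg⟩ := hM
  have hdet := isUnit_det_of_mem_USp6 hUSp
  have hDmem : D ∈ U3block := by
    rw [diagConj_mem_U3block_iff, mem_unitaryGroup_iff]
    simp [scalar_apply, star_eq_conjTranspose]
  have hcentral : ∀ X ∈ U3block, Commute D X := by
    rw [U3block_eq_image]
    rintro _ ⟨C, -, rfl⟩
    exact (scalar_commute I (fun _ => Commute.all _ _) C).map diagConj
  obtain ⟨B, -, hB⟩ : M * D * M⁻¹ ∈ diagConj '' unitaryGroup (Fin 3) ℂ := by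
    rw [← U3block_eq_image, ← himg]
    exact ⟨D, hDmem, rfl⟩
  have hBcomm : ∀ A ∈ unitaryGroup (Fin 3) ℂ, Commute B A := by
    intro A hA
    obtain ⟨X, hX, hXA⟩ : diagConj A ∈ (fun X => M * X * M⁻¹) '' U3block := by
      rw [himg]
      exact diagConj_mem_U3block_iff.2 hA
    refine Commute.of_map diagConj_injective ?_
    rw [hB, ← hXA]
    exact commute_conj hdet (hcentral X hX)
  obtain ⟨z, rfl⟩ := mem_range_scalar_of_commute_unitaryGroup hBcomm
  have hDD : D * D = -1 := by
    rw [hD, ← map_mul, ← map_mul, I_mul_I, map_neg, map_one, map_neg, map_one]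
  have hz : diagConj (scalar (Fin 3) (z * z)) = diagConj (scalar (Fin 3) (I * I)) := by
    rw [map_mul, map_mul, hB, conj_mul_conj hdet, hDD, map_mul, map_mul, ← hD, hDD, Matrix.mul_neg,
      Matrix.neg_mul, Matrix.mul_one, mul_nonsing_inv _ hdet]
  rcases mul_self_eq_mul_self_iff.1 (scalar_inj.1 (diagConj_injective hz)) with rfl | rfl
  · exact Or.inl (semiconjBy_of_conj_eq hdet hB.symm)
  · rw [map_neg, map_neg] at hB
    exact Or.inr (semiconjBy_of_conj_eq hdet hB.symm)

theorem Normalizer_subset : Normalizer ⊆ U3block ∪ (fun X => Jmat * X) '' U3block := by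
  intro M hM
  obtain ⟨hMU, hMS⟩ := mem_USp6_iff.1 hM.1
  obtain ⟨hJU, hJS⟩ := mem_USp6_iff.1 J_mem_USp6
  rw [U3block_eq_image]
  rcases commute_or_semiconjBy_neg_of_mem_Normalizer hM with h | h
  · exact Or.inl (exists_diagConj_eq_of_commute hMU hMS h)
  · have hJ := (semiconjBy_J_diagConj_scalar (n := Fin 3) I).neg_right
    rw [conj_I, map_neg, map_neg, neg_neg] at hJ
    refine Or.inr ⟨J (Fin 3) ℂ * M,
      exists_diagConj_eq_of_commute (mul_mem hJU hMU) (mul_mem hJS hMS) (hJ.mul_left h), ?_⟩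
    dsimp only
    rw [← Matrix.mul_assoc, ← Jmat_inv, mul_nonsing_inv _ (isUnit_det_of_mem_USp6 Jmat_mem_USp6),
      Matrix.one_mul]

end USp6

theorem stmt_16 :
    Normalizer = U3block ∪ (fun X => Jmat * X) '' U3block ∧
      Jmat ∉ U3block ∧ Jmat * Jmat ∈ U3block :=
  ⟨Normalizer_subset.antisymm (Set.union_subset U3block_subset_Normalizer
      (Set.image_subset_iff.2 fun _ hX => mul_mem_Normalizer Jmat_mem_Normalizer
        (U3block_subset_Normalizer hX))),
    Jmat_not_mem_U3block, Jmat_mul_Jmat_mem_U3block⟩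
end
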